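/- Let (K, δ) be a separably differentially closed field of characteristic p > 0. Then the extension K/C_K of K over its field of constants has infinite degree; consequently [K : K^p] is infinite, so K is a separably closed field of infinite degree of imperfection. -/

import Mathlib

set_option synthInstance.maxHeartbeats 1000000
set_option maxHeartbeats 1000000

open MvPolynomial
noncomputable section
variable {K : Type*} [Field K]

/-- order of a differential polynomial -/
def ordOf (f : MvPolynomial ℕ K) : ℕ := f.vars.sup id

/-- separant -/
def sep (f : MvPolynomial ℕ K) : MvPolynomial ℕ K := pderiv (ordOf f) f

/-- rank of a differential polynomial -/
def rankOf (f : MvPolynomial ℕ K) : ℕ × ℕ := (ordOf f, f.degreeOf (ordOf f))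

/-- the differential ideal generated by f -/
def diffIdeal (D : Derivation ℤ (MvPolynomial ℕ K) (MvPolynomial ℕ K))
    (f : MvPolynomial ℕ K) : Ideal (MvPolynomial ℕ K) :=
  Ideal.span (Set.range fun n : ℕ => (⇑D)^[n] f)

/-- saturation I : s^∞ -/
def saturation {R : Type*} [CommRing R] (J : Ideal R) (s : R) : Ideal R where
  carrier := {h | ∃ m : ℕ, s ^ m * h ∈ J}
  zero_mem' := ⟨0, by simp⟩
  add_mem' := by
    rintro a b ⟨m, hm⟩ ⟨n, hn⟩
    refine ⟨m + n, ?_⟩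
    have h : s ^ (m + n) * (a + b) = s ^ n * (s ^ m * a) + s ^ m * (s ^ n * b) := by ring
    rw [h]
    exact J.add_mem (J.mul_mem_left _ hm) (J.mul_mem_left _ hn)
  smul_mem' := by
    rintro c a ⟨m, hm⟩
    refine ⟨m, ?_⟩
    have h : s ^ m * (c • a) = c * (s ^ m * a) := by rw [smul_eq_mul]; ring
    rw [h]
    exact J.mul_mem_left _ hm

/-- evaluation of a differential polynomial at a point of K -/
def evalD (δ : Derivation ℤ K K) (a : K) (f : MvPolynomial ℕ K) : K :=
  MvPolynomial.eval (fun n => (⇑δ)^[n] a) f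

/-- the field of constants -/
def constants (δ : Derivation ℤ K K) : Subfield K where
  carrier := {a | δ a = 0}
  zero_mem' := by simp
  one_mem' := by simp
  add_mem' := by intro a b ha hb; simp only [Set.mem_setOf_eq] at *; rw [map_add, ha, hb, add_zero]
  mul_mem' := by
    intro a b ha hb; simp only [Set.mem_setOf_eq] at *
    rw [Derivation.leibniz, ha, hb]; simp
  neg_mem' := by intro a ha; simp only [Set.mem_setOf_eq] at *; rw [map_neg, ha, neg_zero]
  inv_mem' := by
    intro a ha
    simp only [Set.mem_setOf_eq] at *
    rcases eq_or_ne a 0 with rfl | h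
    · simp
    · have h1 : a * a⁻¹ = 1 := mul_inv_cancel₀ h
      have h2 : δ (a * a⁻¹) = 0 := by rw [h1]; exact δ.map_one_eq_zero
      rw [Derivation.leibniz, ha] at h2
      simp only [smul_eq_mul, mul_zero, add_zero, zero_mul, smul_zero] at h2
      exact (mul_eq_zero.mp h2).resolve_left h

/-- the SDCF axiom scheme -/
def SDCFAx (δ : Derivation ℤ K K) : Prop :=
  ∀ f g : MvPolynomial ℕ K, f ≠ 0 → g ≠ 0 → sep f ≠ 0 → ordOf g < ordOf f →
    ∃ a : K, evalD δ a f = 0 ∧ evalD δ a g ≠ 0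

/-!
A constant `c` satisfies `δ (c * x) = c * δ x`, so `δ` is linear over every subfield of constants,
in particular over `K^p`, since `δ (y ^ p) = p * y ^ (p - 1) * δ y = 0`. The axiom applied to
`f = x⁽ⁿ⁺¹⁾`, `g = x⁽ⁿ⁾` gives `a` with `δ^[n+1] a = 0 ≠ δ^[n] a`, so the kernels of the powers of
`δ` never stabilise, which is impossible in a finite-dimensional vector space.
If `q` is irreducible and separable then `q' ≠ 0`, so `f = q(x')` has order `1` and separant
`q'(x') ≠ 0`; the axiom with `g = 1` gives `a` with `q(δ a) = 0`.
-/

theorem Module.End.not_finiteDimensional_of_ker_pow_ne_ker_pow_succ {F V : Type*} [DivisionRing F]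
    [AddCommGroup V] [Module F V] (T : Module.End F V)
    (h : ∀ n, LinearMap.ker (T ^ n) ≠ LinearMap.ker (T ^ (n + 1))) : ¬ FiniteDimensional F V :=
  fun _ ↦ h _ (Module.End.ker_pow_eq_ker_pow_finrank_of_le (Nat.le_succ _)).symm

lemma Polynomial.vars_toMvPolynomial_subset {R σ : Type*} [CommSemiring R] (q : Polynomial R)
    (i : σ) : (q.toMvPolynomial i).vars ⊆ {i} := by
  classical
  rw [← rename_toMvPolynomial (fun _ : Unit ↦ i) ()]
  refine (vars_rename _ _).trans fun j hj ↦ ?_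
  obtain ⟨_, _, rfl⟩ := Finset.mem_image.1 hj
  exact Finset.mem_singleton_self _

lemma Polynomial.pderiv_toMvPolynomial {R σ : Type*} [CommSemiring R] [DecidableEq σ]
    (q : Polynomial R) (i : σ) :
    pderiv i (q.toMvPolynomial i) = (Polynomial.derivative q).toMvPolynomial i := by
  simp [Polynomial.toMvPolynomial, Derivation.map_aeval]

lemma ordOf_toMvPolynomial {q : Polynomial K} (hq : Polynomial.derivative q ≠ 0) (i : ℕ) :
    ordOf (q.toMvPolynomial i) = i := by
  have hi : i ∈ (q.toMvPolynomial i).vars := by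
    contrapose! hq
    rw [← Polynomial.toMvPolynomial_inj (i := i), map_zero, ← Polynomial.pderiv_toMvPolynomial]
    exact pderiv_eq_zero_of_notMem_vars hq
  rw [ordOf, Finset.Subset.antisymm (q.vars_toMvPolynomial_subset i)
    (Finset.singleton_subset_iff.2 hi), Finset.sup_singleton, id]

section Differential

variable (δ : Derivation ℤ K K)

def Derivation.toEndOfLeConstants {S : Subfield K} (hS : S ≤ constants δ) : Module.End S K where
  toFun := δ
  map_add' := map_add δ
  map_smul' c x := by
    change δ (c * x) = c * δ x
    rw [Derivation.leibniz, hS c.2, smul_zero, add_zero, smul_eq_mul]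

lemma Derivation.toEndOfLeConstants_pow_apply {S : Subfield K} (hS : S ≤ constants δ) (n : ℕ)
    (x : K) : (δ.toEndOfLeConstants hS ^ n) x = (⇑δ)^[n] x :=
  Module.End.pow_apply _ _ _

lemma frobenius_fieldRange_le_constants (p : ℕ) [Fact p.Prime] [CharP K p] :
    (frobenius K p).fieldRange ≤ constants δ := by
  rintro _ ⟨y, rfl⟩
  change δ (y ^ p) = 0
  rw [Derivation.leibniz_pow, ← Nat.cast_smul_eq_nsmul K, CharP.cast_eq_zero K p, zero_smul]

variable {δ}

lemma SDCFAx.exists_iterate_eq_zero (h : SDCFAx δ) (n : ℕ) :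
    ∃ a, (⇑δ)^[n + 1] a = 0 ∧ (⇑δ)^[n] a ≠ 0 := by
  have hord (m : ℕ) : ordOf (X m : MvPolynomial ℕ K) = m := by
    rw [ordOf, vars_X, Finset.sup_singleton, id]
  obtain ⟨a, ha, ha'⟩ := h (X (n + 1)) (X n) (X_ne_zero _) (X_ne_zero _)
    (by rw [sep, hord, pderiv_X_self]; exact one_ne_zero) (by rw [hord, hord]; exact n.lt_succ_self)
  exact ⟨a, by simpa [evalD] using ha, by simpa [evalD] using ha'⟩

lemma SDCFAx.not_finiteDimensional_of_le_constants (h : SDCFAx δ) {S : Subfield K}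
    (hS : S ≤ constants δ) : ¬ FiniteDimensional S K := by
  refine (δ.toEndOfLeConstants hS).not_finiteDimensional_of_ker_pow_ne_ker_pow_succ fun n hker ↦ ?_
  obtain ⟨a, ha, ha'⟩ := h.exists_iterate_eq_zero n
  have : a ∈ LinearMap.ker (δ.toEndOfLeConstants hS ^ (n + 1)) := by
    rw [LinearMap.mem_ker, Derivation.toEndOfLeConstants_pow_apply, ha]
  rw [← hker, LinearMap.mem_ker, Derivation.toEndOfLeConstants_pow_apply] at this
  exact ha' this

lemma SDCFAx.exists_root (h : SDCFAx δ) {q : Polynomial K} (hq : Polynomial.derivative q ≠ 0) :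
    ∃ x, q.eval x = 0 := by
  have hsep : sep (q.toMvPolynomial 1) ≠ 0 := by
    rwa [sep, ordOf_toMvPolynomial hq, Polynomial.pderiv_toMvPolynomial, Ne,
      ← map_zero (Polynomial.toMvPolynomial 1), Polynomial.toMvPolynomial_inj]
  have hf : q.toMvPolynomial 1 ≠ 0 := fun hf ↦ hsep (by rw [hf, sep, map_zero])
  obtain ⟨a, ha, -⟩ := h _ 1 hf one_ne_zero hsep (by rw [ordOf_toMvPolynomial hq]; simp [ordOf])
  exact ⟨δ a, by simpa [evalD] using ha⟩

lemma SDCFAx.isSepClosed (h : SDCFAx δ) : IsSepClosed K :=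
  IsSepClosed.of_exists_root K fun _ _ hirr hsep ↦
    h.exists_root ((Polynomial.separable_iff_derivative_ne_zero hirr).1 hsep)

end Differential

theorem stmt11 {K : Type*} [Field K] (p : ℕ) [Fact p.Prime] [CharP K p]
    (δ : Derivation ℤ K K) (h : SDCFAx δ) :
    ¬ FiniteDimensional (constants δ) K ∧
    ¬ FiniteDimensional ((frobenius K p).fieldRange) K ∧
    IsSepClosed K :=
  ⟨h.not_finiteDimensional_of_le_constants le_rfl,
    h.not_finiteDimensional_of_le_constants (frobenius_fieldRange_le_constants δ p),
    h.isSepClosed⟩
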